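/- Suppose p, e, s : (0,∞)² → ℝ are C¹ functions satisfying Gibbs' equation ϑ ∂s/∂ϱ = ∂e/∂ϱ − p/ϱ² and ϑ ∂s/∂ϑ = ∂e/∂ϑ. If additionally p(ϱ,ϑ) = (2/3) ϱ e(ϱ,ϑ), then there exists (locally) a C¹ function P such that p(ϱ,ϑ) = ϑ^{5/2} P(ϱ/ϑ^{3/2}) and e(ϱ,ϑ) = (3/2)(ϑ^{5/2}/ϱ) P(ϱ/ϑ^{3/2}). -/

import Mathlib

/-!
Gibbs' equation gives `∂(ϑ s - e)/∂ϑ = s`, and together with `p = (2/3) ϱ e` it makes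
`u ↦ ϑ s(u³ϱ, u²ϑ) - e(u³ϱ, u²ϑ)/u²` stationary. So `ϑ s - e` is homogeneous of degree 2
under `(ϱ, ϑ) ↦ (l³ϱ, l²ϑ)`; differentiating that identity in `ϑ` shows that `s` is invariant,
hence `e` is homogeneous of degree 2 too. Taking `l = √ϑ` gives `e(ϱ, ϑ) = ϑ e(Z, 1)` with
`Z = ϱ/ϑ^{3/2}`, and `P` is a bump-function extension of `Z ↦ (2/3) Z e(Z, 1)` from a
neighbourhood of `Z₀`. Only first derivatives along curves are used, so no mixed second
derivatives of `s` are needed.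
-/

open Set Filter Topology

theorem hasDerivAt_comp_of_differentiableAt {f : ℝ → ℝ → ℝ} {γ₁ γ₂ : ℝ → ℝ} {c d t : ℝ}
    (hf : DifferentiableAt ℝ (fun q : ℝ × ℝ => f q.1 q.2) (γ₁ t, γ₂ t))
    (h₁ : HasDerivAt γ₁ c t) (h₂ : HasDerivAt γ₂ d t) :
    HasDerivAt (fun u => f (γ₁ u) (γ₂ u))
      (c * deriv (fun x => f x (γ₂ t)) (γ₁ t) + d * deriv (fun y => f (γ₁ t) y) (γ₂ t)) t := by
  set L := fderiv ℝ (fun q : ℝ × ℝ => f q.1 q.2) (γ₁ t, γ₂ t)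
  have hL := hf.hasFDerivAt
  have h_fst : deriv (fun x => f x (γ₂ t)) (γ₁ t) = L (1, 0) :=
    (hL.comp_hasDerivAt (x := γ₁ t) (f := fun x => (x, γ₂ t))
      ((hasDerivAt_id' _).prodMk (hasDerivAt_const _ _))).deriv
  have h_snd : deriv (fun y => f (γ₁ t) y) (γ₂ t) = L (0, 1) :=
    (hL.comp_hasDerivAt (x := γ₂ t) (f := fun y => (γ₁ t, y))
      ((hasDerivAt_const _ _).prodMk (hasDerivAt_id' _))).deriv
  have h_lin : L (c, d) = c * L (1, 0) + d * L (0, 1) := by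
    rw [← smul_eq_mul, ← smul_eq_mul, ← map_smul, ← map_smul, ← map_add]
    simp
  rw [h_fst, h_snd, ← h_lin]
  exact hL.comp_hasDerivAt t (h₁.prodMk h₂)

theorem ContDiffOn.exists_contDiff_eventuallyEq {E F : Type*} [NormedAddCommGroup E]
    [NormedSpace ℝ E] [HasContDiffBump E] [NormedAddCommGroup F] [NormedSpace ℝ F]
    {n : ℕ∞} {f : E → F} {s : Set E} (hf : ContDiffOn ℝ n f s) (hs : IsOpen s)
    {x : E} (hx : x ∈ s) : ∃ g : E → F, ContDiff ℝ n g ∧ g =ᶠ[𝓝 x] f := by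
  obtain ⟨r, hr, hrs⟩ := Metric.isOpen_iff.1 hs x hx
  let ψ : ContDiffBump x := ⟨r / 4, r / 2, by positivity, by linarith⟩
  refine ⟨fun y => ψ y • f y, ?_, ?_⟩
  · have h_off : ContDiffOn ℝ n (fun y => ψ y • f y) (tsupport ψ)ᶜ :=
      contDiffOn_const.congr fun y hy => by
        rw [image_eq_zero_of_notMem_tsupport hy, zero_smul]
    refine contDiff_of_contDiffOn_union_of_isOpen (ψ.contDiff.contDiffOn.smul hf) h_off ?_ hs
      (isClosed_tsupport ψ).isOpen_compl
    refine eq_univ_of_forall fun y => (em (y ∈ tsupport ψ)).imp (fun hy => hrs ?_) id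
    rw [ψ.tsupport_eq] at hy
    exact Metric.closedBall_subset_ball (half_lt_self hr) hy
  · filter_upwards [Metric.ball_mem_nhds x (by positivity : 0 < r / 4)] with y hy
    rw [ψ.one_of_mem_closedBall (Metric.ball_subset_closedBall hy), one_smul]

section Gibbs

variable {p e s : ℝ → ℝ → ℝ}
  (he : DifferentiableOn ℝ (fun q : ℝ × ℝ => e q.1 q.2) (Ioi 0 ×ˢ Ioi 0))
  (hs : DifferentiableOn ℝ (fun q : ℝ × ℝ => s q.1 q.2) (Ioi 0 ×ˢ Ioi 0))
  (hGibbs1 : ∀ ϱ ϑ : ℝ, 0 < ϱ → 0 < ϑ →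
    ϑ * deriv (fun x => s x ϑ) ϱ = deriv (fun x => e x ϑ) ϱ - p ϱ ϑ / ϱ ^ 2)
  (hGibbs2 : ∀ ϱ ϑ : ℝ, 0 < ϱ → 0 < ϑ →
    ϑ * deriv (fun y => s ϱ y) ϑ = deriv (fun y => e ϱ y) ϑ)
  (hmono : ∀ ϱ ϑ : ℝ, 0 < ϱ → 0 < ϑ → p ϱ ϑ = (2/3) * ϱ * e ϱ ϑ)

include he hs hGibbs2 in
theorem hasDerivAt_mul_entropy_sub_energy {ϱ ϑ : ℝ} (hϱ : 0 < ϱ) (hϑ : 0 < ϑ) :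
    HasDerivAt (fun y => y * s ϱ y - e ϱ y) (s ϱ ϑ) ϑ := by
  have hmem := (isOpen_Ioi.prod isOpen_Ioi).mem_nhds
    (show (ϱ, ϑ) ∈ Ioi (0:ℝ) ×ˢ Ioi 0 from ⟨hϱ, hϑ⟩)
  have hS := hasDerivAt_comp_of_differentiableAt (f := s) (hs.differentiableAt hmem)
    (hasDerivAt_const ϑ ϱ) (hasDerivAt_id' ϑ)
  have hE := hasDerivAt_comp_of_differentiableAt (f := e) (he.differentiableAt hmem)
    (hasDerivAt_const ϑ ϱ) (hasDerivAt_id' ϑ)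
  refine (((hasDerivAt_id' ϑ).mul hS).sub hE).congr_deriv ?_
  linear_combination hGibbs2 ϱ ϑ hϱ hϑ

include he hs hGibbs1 hGibbs2 hmono in
theorem hasDerivAt_entropy_sub_energy_along_scaling {ϱ ϑ u : ℝ} (hϱ : 0 < ϱ) (hϑ : 0 < ϑ)
    (hu : 0 < u) :
    HasDerivAt (fun v => ϑ * s (v ^ 3 * ϱ) (v ^ 2 * ϑ) - e (v ^ 3 * ϱ) (v ^ 2 * ϑ) / v ^ 2)
      0 u := by
  have hϱ' : 0 < u ^ 3 * ϱ := by positivity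
  have hϑ' : 0 < u ^ 2 * ϑ := by positivity
  have hmem := (isOpen_Ioi.prod isOpen_Ioi).mem_nhds
    (show (u ^ 3 * ϱ, u ^ 2 * ϑ) ∈ Ioi (0:ℝ) ×ˢ Ioi 0 from ⟨hϱ', hϑ'⟩)
  have hγ₁ : HasDerivAt (fun v => v ^ 3 * ϱ) (3 * u ^ 2 * ϱ) u := by
    simpa using (hasDerivAt_pow 3 u).mul_const ϱ
  have hγ₂ : HasDerivAt (fun v => v ^ 2 * ϑ) (2 * u * ϑ) u := by
    simpa using (hasDerivAt_pow 2 u).mul_const ϑ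
  have hS := hasDerivAt_comp_of_differentiableAt (f := s) (hs.differentiableAt hmem) hγ₁ hγ₂
  have hE := hasDerivAt_comp_of_differentiableAt (f := e) (he.differentiableAt hmem) hγ₁ hγ₂
  have hsq : HasDerivAt (fun v => v ^ 2) (2 * u) u := by simpa using hasDerivAt_pow 2 u
  refine ((hS.const_mul ϑ).sub (hE.div hsq (by positivity))).congr_deriv ?_
  have h₁ := hGibbs1 _ _ hϱ' hϑ'
  rw [hmono _ _ hϱ' hϑ'] at h₁
  field_simp at h₁
  rw [sub_eq_zero, eq_div_iff (by positivity)]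
  linear_combination u * h₁ + 2 * u ^ 3 * ϑ * hGibbs2 _ _ hϱ' hϑ'

include he hs hGibbs1 hGibbs2 hmono in
theorem mul_entropy_sub_energy_scaling {ϱ ϑ l : ℝ} (hϱ : 0 < ϱ) (hϑ : 0 < ϑ) (hl : 0 < l) :
    l ^ 2 * ϑ * s (l ^ 3 * ϱ) (l ^ 2 * ϑ) - e (l ^ 3 * ϱ) (l ^ 2 * ϑ) =
      l ^ 2 * (ϑ * s ϱ ϑ - e ϱ ϑ) := by
  have hderiv := fun u (hu : u ∈ Ioi (0:ℝ)) =>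
    hasDerivAt_entropy_sub_energy_along_scaling he hs hGibbs1 hGibbs2 hmono hϱ hϑ hu
  have hconst := isOpen_Ioi.is_const_of_deriv_eq_zero isPreconnected_Ioi
    (fun u hu => (hderiv u hu).differentiableAt.differentiableWithinAt)
    (fun u hu => (hderiv u hu).deriv) (mem_Ioi.2 hl) (mem_Ioi.2 one_pos)
  simp only [one_pow, one_mul, div_one] at hconst
  have hcancel : e (l ^ 3 * ϱ) (l ^ 2 * ϑ) / l ^ 2 * l ^ 2 = e (l ^ 3 * ϱ) (l ^ 2 * ϑ) :=
    div_mul_cancel₀ _ (by positivity)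
  linear_combination l ^ 2 * hconst + hcancel

include he hs hGibbs1 hGibbs2 hmono in
theorem entropy_scaling {ϱ ϑ l : ℝ} (hϱ : 0 < ϱ) (hϑ : 0 < ϑ) (hl : 0 < l) :
    s (l ^ 3 * ϱ) (l ^ 2 * ϑ) = s ϱ ϑ := by
  have hscaled : HasDerivAt
      (fun y => l ^ 2 * y * s (l ^ 3 * ϱ) (l ^ 2 * y) - e (l ^ 3 * ϱ) (l ^ 2 * y))
      (s (l ^ 3 * ϱ) (l ^ 2 * ϑ) * l ^ 2) ϑ :=
    (hasDerivAt_mul_entropy_sub_energy he hs hGibbs2 (by positivity) (by positivity)).comp ϑ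
      ((hasDerivAt_id' ϑ).const_mul (l ^ 2) |>.congr_deriv (mul_one _))
  have hunscaled := (hasDerivAt_mul_entropy_sub_energy he hs hGibbs2 hϱ hϑ).const_mul (l ^ 2)
  have heq : (fun y => l ^ 2 * y * s (l ^ 3 * ϱ) (l ^ 2 * y) - e (l ^ 3 * ϱ) (l ^ 2 * y))
      =ᶠ[𝓝 ϑ] fun y => l ^ 2 * (y * s ϱ y - e ϱ y) := by
    filter_upwards [isOpen_Ioi.mem_nhds hϑ] with y hy
    exact mul_entropy_sub_energy_scaling he hs hGibbs1 hGibbs2 hmono hϱ hy hl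
  have := (hscaled.congr_of_eventuallyEq heq.symm).unique hunscaled
  exact mul_right_cancel₀ (by positivity) (this.trans (mul_comm _ _))

include he hs hGibbs1 hGibbs2 hmono in
theorem energy_scaling {ϱ ϑ l : ℝ} (hϱ : 0 < ϱ) (hϑ : 0 < ϑ) (hl : 0 < l) :
    e (l ^ 3 * ϱ) (l ^ 2 * ϑ) = l ^ 2 * e ϱ ϑ := by
  have h := mul_entropy_sub_energy_scaling he hs hGibbs1 hGibbs2 hmono hϱ hϑ hl
  rw [entropy_scaling he hs hGibbs1 hGibbs2 hmono hϱ hϑ hl] at h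
  linear_combination -h

include he hs hGibbs1 hGibbs2 hmono in
theorem energy_eq_mul_energy_at_one {ϱ ϑ : ℝ} (hϱ : 0 < ϱ) (hϑ : 0 < ϑ) :
    e ϱ ϑ = ϑ * e (ϱ / ϑ ^ ((3:ℝ)/2)) 1 := by
  have hcube : √ϑ ^ 3 = ϑ ^ ((3:ℝ)/2) := by
    rw [Real.sqrt_eq_rpow, ← Real.rpow_natCast, ← Real.rpow_mul hϑ.le]
    norm_num
  have h := energy_scaling he hs hGibbs1 hGibbs2 hmono
    (div_pos hϱ (Real.rpow_pos_of_pos hϑ ((3:ℝ)/2))) one_pos (Real.sqrt_pos.2 hϑ)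
  rwa [hcube, mul_div_cancel₀ _ (by positivity), mul_one, Real.sq_sqrt hϑ.le] at h

end Gibbs

theorem monoatomic_structural_form_general
    (p e s : ℝ → ℝ → ℝ)
    (he : ContDiffOn ℝ 1 (fun q : ℝ × ℝ => e q.1 q.2) (Set.Ioi 0 ×ˢ Set.Ioi 0))
    (hs : ContDiffOn ℝ 1 (fun q : ℝ × ℝ => s q.1 q.2) (Set.Ioi 0 ×ˢ Set.Ioi 0))
    (hGibbs1 : ∀ ϱ ϑ : ℝ, 0 < ϱ → 0 < ϑ →
      ϑ * deriv (fun x => s x ϑ) ϱ = deriv (fun x => e x ϑ) ϱ - p ϱ ϑ / ϱ ^ 2)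
    (hGibbs2 : ∀ ϱ ϑ : ℝ, 0 < ϱ → 0 < ϑ →
      ϑ * deriv (fun y => s ϱ y) ϑ = deriv (fun y => e ϱ y) ϑ)
    (hmono : ∀ ϱ ϑ : ℝ, 0 < ϱ → 0 < ϑ → p ϱ ϑ = (2/3) * ϱ * e ϱ ϑ) :
    ∀ ϱ₀ ϑ₀ : ℝ, 0 < ϱ₀ → 0 < ϑ₀ →
      ∃ (P : ℝ → ℝ) (U : Set (ℝ × ℝ)), ContDiff ℝ 1 P ∧ IsOpen U ∧
        (ϱ₀, ϑ₀) ∈ U ∧ U ⊆ Set.Ioi 0 ×ˢ Set.Ioi 0 ∧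
        ∀ ϱ ϑ : ℝ, (ϱ, ϑ) ∈ U →
          p ϱ ϑ = ϑ ^ ((5:ℝ)/2) * P (ϱ / ϑ ^ ((3:ℝ)/2)) ∧
          e ϱ ϑ = (3/2) * (ϑ ^ ((5:ℝ)/2) / ϱ) * P (ϱ / ϑ ^ ((3:ℝ)/2)) := by
  intro ϱ₀ ϑ₀ hϱ₀ hϑ₀
  have he_one : ContDiffOn ℝ 1 (fun z => (2/3) * z * e z 1) (Ioi 0) :=
    contDiffOn_const.mul contDiffOn_id |>.mul <|
      he.comp (contDiffOn_id.prodMk contDiffOn_const) fun z hz => ⟨hz, mem_Ioi.2 one_pos⟩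
  obtain ⟨P, hP, hP_eq⟩ := he_one.exists_contDiff_eventuallyEq isOpen_Ioi
    (div_pos hϱ₀ (Real.rpow_pos_of_pos hϑ₀ ((3:ℝ)/2)))
  obtain ⟨V, hV_eq, hV_open, hV_mem⟩ := eventually_nhds_iff.1 hP_eq
  have hZ_cont : ContinuousOn (fun q : ℝ × ℝ => q.1 / q.2 ^ ((3:ℝ)/2)) (Ioi 0 ×ˢ Ioi 0) :=
    continuousOn_fst.div (continuousOn_snd.rpow_const fun q hq => Or.inl hq.2.ne')
      fun q hq => (Real.rpow_pos_of_pos hq.2 _).ne'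
  refine ⟨P, _, hP, hZ_cont.isOpen_inter_preimage (isOpen_Ioi.prod isOpen_Ioi) hV_open,
    ⟨⟨hϱ₀, hϑ₀⟩, hV_mem⟩, inter_subset_left, ?_⟩
  rintro ϱ ϑ ⟨⟨hϱ : 0 < ϱ, hϑ : 0 < ϑ⟩, hZ⟩
  have he_eq := energy_eq_mul_energy_at_one (he.differentiableOn one_ne_zero)
    (hs.differentiableOn one_ne_zero) hGibbs1 hGibbs2 hmono hϱ hϑ
  have h52 : ϑ ^ ((5:ℝ)/2) = ϑ ^ ((3:ℝ)/2) * ϑ := by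
    rw [← Real.rpow_add_one hϑ.ne']
    norm_num
  rw [hV_eq _ hZ, hmono ϱ ϑ hϱ hϑ, he_eq, h52]
  constructor <;> field_simp

/-- Gibbs' equation together with the monoatomic relation `p = (2/3)ϱe`
forces, locally, the structural form `p(ϱ,ϑ) = ϑ^{5/2} P(ϱ/ϑ^{3/2})`,
`e(ϱ,ϑ) = (3/2)(ϑ^{5/2}/ϱ) P(ϱ/ϑ^{3/2})` for a single C¹ function `P`. -/
theorem monoatomic_structural_form
    (p e s : ℝ → ℝ → ℝ)
    (hp : ContDiffOn ℝ 1 (fun q : ℝ × ℝ => p q.1 q.2) (Set.Ioi 0 ×ˢ Set.Ioi 0))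
    (he : ContDiffOn ℝ 1 (fun q : ℝ × ℝ => e q.1 q.2) (Set.Ioi 0 ×ˢ Set.Ioi 0))
    (hs : ContDiffOn ℝ 1 (fun q : ℝ × ℝ => s q.1 q.2) (Set.Ioi 0 ×ˢ Set.Ioi 0))
    (hGibbs1 : ∀ ϱ ϑ : ℝ, 0 < ϱ → 0 < ϑ →
      ϑ * deriv (fun x => s x ϑ) ϱ = deriv (fun x => e x ϑ) ϱ - p ϱ ϑ / ϱ ^ 2)
    (hGibbs2 : ∀ ϱ ϑ : ℝ, 0 < ϱ → 0 < ϑ →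
      ϑ * deriv (fun y => s ϱ y) ϑ = deriv (fun y => e ϱ y) ϑ)
    (hmono : ∀ ϱ ϑ : ℝ, 0 < ϱ → 0 < ϑ → p ϱ ϑ = (2/3) * ϱ * e ϱ ϑ) :
    ∀ ϱ₀ ϑ₀ : ℝ, 0 < ϱ₀ → 0 < ϑ₀ →
      ∃ (P : ℝ → ℝ) (U : Set (ℝ × ℝ)), ContDiff ℝ 1 P ∧ IsOpen U ∧
        (ϱ₀, ϑ₀) ∈ U ∧ U ⊆ Set.Ioi 0 ×ˢ Set.Ioi 0 ∧
        ∀ ϱ ϑ : ℝ, (ϱ, ϑ) ∈ U →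
          p ϱ ϑ = ϑ ^ ((5:ℝ)/2) * P (ϱ / ϑ ^ ((3:ℝ)/2)) ∧
          e ϱ ϑ = (3/2) * (ϑ ^ ((5:ℝ)/2) / ϱ) * P (ϱ / ϑ ^ ((3:ℝ)/2)) :=
  monoatomic_structural_form_general p e s he hs hGibbs1 hGibbs2 hmono
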